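/- arXiv:1104.4459 — 5 statements merged into one kernel-verified Lean document; each statement's English description precedes it below -/
import Mathlib

section
/- For all r in (0,1], the product of the modified Bessel functions satisfies I₀(r)·K₀(r) ≤ 1 - log r. -/
open Real MeasureTheory Filter Set

noncomputable def besselI0 (r : ℝ) : ℝ :=
  ∑' k : ℕ, (r ^ 2 / 4) ^ k / (Nat.factorial k : ℝ) ^ 2

noncomputable def besselK0Series (r : ℝ) : ℝ :=
  ∑' k : ℕ, (harmonic (k + 1) : ℝ) * (r ^ 2 / 4) ^ (k + 1) / (Nat.factorial (k + 1) : ℝ) ^ 2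

noncomputable def besselK0 (r : ℝ) : ℝ :=
  -(Real.log (r / 2) + Real.eulerMascheroniConstant) * besselI0 r + besselK0Series r

/-!
Write `x = r²/4` and `L = -log r ≥ 0`. Comparing the series termwise with that of the exponential
gives `1 ≤ I₀(r) ≤ eˣ` and `0 ≤ ∑ₖ Hₖ xᵏ/(k!)² ≤ x eˣ` (using `Hₖ ≤ k`). Since
`I₀ K₀ = L I₀² + (log 2 - γ) I₀² + I₀ ∑ₖ Hₖ xᵏ/(k!)²`, it suffices that
`L (I₀² - 1) + (log 2 - γ) I₀² + x e²ˣ ≤ 1`. The first term is at most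
`L (e²ˣ - 1) ≤ L r² e^{1/2} / 2 ≤ e^{1/2} / (4e)`, because `-r² log r ≤ 1/(2e)`; with `r ≤ 1` the
whole left side is at most `e^{1/2} (1/(4e) + log 2 - γ + 1/4) ≈ 0.76`.
-/

open scoped Nat

lemma harmonic_le_self (n : ℕ) : harmonic n ≤ n := by
  rw [harmonic_eq_sum_Icc]
  calc ∑ i ∈ Finset.Icc 1 n, (i : ℚ)⁻¹ ≤ ∑ _i ∈ Finset.Icc 1 n, (1 : ℚ) :=
        Finset.sum_le_sum fun i hi =>
          inv_le_one_of_one_le₀ (by exact_mod_cast (Finset.mem_Icc.1 hi).1)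
    _ = n := by simp

lemma Real.exp_eq_tsum_pow_div_factorial (x : ℝ) : exp x = ∑' n : ℕ, x ^ n / n ! := by
  rw [Real.exp_eq_exp_ℝ, NormedSpace.exp_eq_tsum_div]

lemma Real.exp_sub_one_le_mul_exp (y : ℝ) : exp y - 1 ≤ y * exp y := by
  have h := mul_le_mul_of_nonneg_right (one_sub_le_exp_neg y) (exp_pos y).le
  rw [← exp_add, neg_add_cancel, exp_zero] at h
  linarith

lemma Real.neg_log_mul_sq_le {r : ℝ} (hr : 0 < r) : -log r * r ^ 2 ≤ exp (-1) / 2 := by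
  have h := mul_exp_neg_le_exp_neg_one (-2 * log r)
  have hsq : exp (-(-2 * log r)) = r ^ 2 := by
    rw [← exp_log (pow_pos hr 2), log_pow]
    ring_nf
  rw [hsq] at h
  linarith

lemma besselI0_term_le (r : ℝ) (k : ℕ) :
    (r ^ 2 / 4) ^ k / (k ! : ℝ) ^ 2 ≤ (r ^ 2 / 4) ^ k / k ! := by
  have hk : (1 : ℝ) ≤ k ! := by exact_mod_cast k.factorial_pos
  exact div_le_div_of_nonneg_left (by positivity) (by positivity) (le_self_pow₀ hk two_ne_zero)

lemma summable_besselI0 (r : ℝ) : Summable fun k : ℕ => (r ^ 2 / 4) ^ k / (k ! : ℝ) ^ 2 :=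
  (summable_pow_div_factorial _).of_nonneg_of_le (fun _ => by positivity) (besselI0_term_le r)

lemma one_le_besselI0 (r : ℝ) : 1 ≤ besselI0 r := by
  simpa [besselI0] using (summable_besselI0 r).le_tsum 0 fun _ _ => by positivity

lemma besselI0_le_exp (r : ℝ) : besselI0 r ≤ exp (r ^ 2 / 4) := by
  rw [besselI0, exp_eq_tsum_pow_div_factorial]
  exact (summable_besselI0 r).tsum_le_tsum (besselI0_term_le r) (summable_pow_div_factorial _)

lemma sq_besselI0_le_exp (r : ℝ) : besselI0 r ^ 2 ≤ exp (r ^ 2 / 2) := by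
  calc besselI0 r ^ 2 ≤ exp (r ^ 2 / 4) ^ 2 :=
        pow_le_pow_left₀ (zero_le_one.trans (one_le_besselI0 r)) (besselI0_le_exp r) 2
    _ = exp (r ^ 2 / 2) := by rw [← exp_nat_mul]; ring_nf

lemma besselK0Series_term_le (r : ℝ) (k : ℕ) :
    (harmonic (k + 1) : ℝ) * (r ^ 2 / 4) ^ (k + 1) / ((k + 1) ! : ℝ) ^ 2
      ≤ r ^ 2 / 4 * ((r ^ 2 / 4) ^ k / k !) := by
  set x := r ^ 2 / 4
  have hH : (harmonic (k + 1) : ℝ) ≤ k + 1 := by exact_mod_cast harmonic_le_self (k + 1)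
  have hk : (1 : ℝ) ≤ k ! := by exact_mod_cast k.factorial_pos
  calc (harmonic (k + 1) : ℝ) * x ^ (k + 1) / ((k + 1) ! : ℝ) ^ 2
      ≤ (k + 1) * x ^ (k + 1) / ((k + 1) ! : ℝ) ^ 2 := by gcongr
    _ = x ^ (k + 1) / ((k + 1) * (k ! : ℝ) ^ 2) := by
        rw [Nat.factorial_succ]; push_cast; field_simp
    _ ≤ x ^ (k + 1) / k ! := by gcongr; nlinarith
    _ = x * (x ^ k / k !) := by ring

lemma besselK0Series_le (r : ℝ) : besselK0Series r ≤ r ^ 2 / 4 * exp (r ^ 2 / 4) := by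
  have hg := (summable_pow_div_factorial (r ^ 2 / 4)).mul_left (r ^ 2 / 4)
  have hf := hg.of_nonneg_of_le (fun k => ?_) (besselK0Series_term_le r)
  · rw [besselK0Series, exp_eq_tsum_pow_div_factorial, ← tsum_mul_left]
    exact hf.tsum_le_tsum (besselK0Series_term_le r) hg
  · have := (harmonic_pos k.succ_ne_zero).le
    positivity

lemma besselI0_mul_besselK0Series_le (r : ℝ) :
    besselI0 r * besselK0Series r ≤ r ^ 2 / 4 * exp (r ^ 2 / 2) := by
  calc besselI0 r * besselK0Series r ≤ besselI0 r * (r ^ 2 / 4 * exp (r ^ 2 / 4)) :=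
        mul_le_mul_of_nonneg_left (besselK0Series_le r) (zero_le_one.trans (one_le_besselI0 r))
    _ ≤ exp (r ^ 2 / 4) * (r ^ 2 / 4 * exp (r ^ 2 / 4)) :=
        mul_le_mul_of_nonneg_right (besselI0_le_exp r) (by positivity)
    _ = r ^ 2 / 4 * exp (r ^ 2 / 2) := by rw [mul_left_comm, ← exp_add]; ring_nf

lemma neg_log_mul_sq_besselI0_sub_one_le {r : ℝ} (hr0 : 0 < r) (hr1 : r ≤ 1) :
    -log r * (besselI0 r ^ 2 - 1) ≤ exp (-1) / 4 * exp (r ^ 2 / 2) := by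
  have hL : 0 ≤ -log r := neg_nonneg.2 (log_nonpos hr0.le hr1)
  have hI : besselI0 r ^ 2 - 1 ≤ r ^ 2 / 2 * exp (r ^ 2 / 2) :=
    (sub_le_sub_right (sq_besselI0_le_exp r) 1).trans (exp_sub_one_le_mul_exp _)
  calc -log r * (besselI0 r ^ 2 - 1) ≤ (-log r * r ^ 2) * (exp (r ^ 2 / 2) / 2) :=
        (mul_le_mul_of_nonneg_left hI hL).trans_eq (by ring)
    _ ≤ exp (-1) / 2 * (exp (r ^ 2 / 2) / 2) := by gcongr; exact neg_log_mul_sq_le hr0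
    _ = exp (-1) / 4 * exp (r ^ 2 / 2) := by ring

lemma besselI0_mul_besselK0 {r : ℝ} (hr : 0 < r) :
    besselI0 r * besselK0 r = -log r * besselI0 r ^ 2
      + (log 2 - eulerMascheroniConstant) * besselI0 r ^ 2 + besselI0 r * besselK0Series r := by
  rw [besselK0, log_div hr.ne' two_ne_zero]
  ring

lemma exp_half_mul_le_one :
    exp (1 / 2) * (exp (-1) / 4 + (log 2 - eulerMascheroniConstant) + 1 / 4) ≤ 1 := by
  have hhalf : exp (1 / 2) < 1.65 := by
    have : exp (1 / 2) ^ 2 = exp 1 := by rw [← exp_nat_mul]; norm_num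
    nlinarith [exp_one_lt_d9, exp_pos (1 / 2)]
  have hinv : exp (-1) < 0.368 := by
    rw [exp_neg, inv_lt_comm₀ (exp_pos 1) (by norm_num)]
    linarith [exp_one_gt_d9]
  have hsum : exp (-1) / 4 + (log 2 - eulerMascheroniConstant) + 1 / 4 < 0.54 := by
    linarith [log_two_lt_d9, one_half_lt_eulerMascheroniConstant]
  have hsum_nonneg : 0 ≤ exp (-1) / 4 + (log 2 - eulerMascheroniConstant) + 1 / 4 := by
    linarith [exp_pos (-1), log_two_gt_d9, eulerMascheroniConstant_lt_two_thirds]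
  calc _ ≤ 1.65 * 0.54 := mul_le_mul hhalf.le hsum.le hsum_nonneg (by norm_num)
    _ ≤ 1 := by norm_num

theorem stmt_0 : ∀ r ∈ Set.Ioc (0:ℝ) 1, besselI0 r * besselK0 r ≤ 1 - Real.log r := by
  rintro r ⟨hr0, hr1⟩
  have hx : r ^ 2 / 4 ≤ 1 / 4 := by nlinarith
  have hE : exp (r ^ 2 / 2) ≤ exp (1 / 2) := exp_le_exp.2 (by linarith)
  have hγ : 0 ≤ log 2 - eulerMascheroniConstant := by
    linarith [log_two_gt_d9, eulerMascheroniConstant_lt_two_thirds]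
  have hL := (neg_log_mul_sq_besselI0_sub_one_le hr0 hr1).trans
    (mul_le_mul_of_nonneg_left hE (by positivity))
  have hI := mul_le_mul_of_nonneg_left ((sq_besselI0_le_exp r).trans hE) hγ
  have hS := (besselI0_mul_besselK0Series_le r).trans
    (mul_le_mul hx hE (exp_pos _).le (by norm_num))
  rw [besselI0_mul_besselK0 hr0]
  linarith [exp_half_mul_le_one]
end

section
/- For all r in (0,1], (e^{r²/2} − 1)·(−log r) ≤ 0.11. -/
/-! Since `sinh t ≤ t` for `t ≤ 0`, putting `t = log r` gives `-log r ≤ (1/r - r)/2`, and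
`e^x - 1` is at most its cubic Taylor polynomial with remainder constant `2/9` on `[0, 1]`.
The product of these two bounds is a polynomial in `r` whose maximum on `(0, 1]` is about
`0.1054` (near `r ≈ 0.61`). -/

open Real

lemma neg_log_le_half_inv_sub {r : ℝ} (hr : 0 < r) (hr1 : r ≤ 1) : -log r ≤ (r⁻¹ - r) / 2 := by
  have h := sinh_le_self_iff.2 (log_nonpos hr.le hr1)
  rw [sinh_log hr] at h
  linarith

lemma exp_sub_one_le_cubic {x : ℝ} (h0 : 0 ≤ x) (h1 : x ≤ 1) :
    exp x - 1 ≤ x + x ^ 2 / 2 + 2 / 9 * x ^ 3 := by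
  have h := exp_bound' h0 h1 (n := 3) (by norm_num)
  norm_num [Finset.sum_range_succ, Nat.factorial] at h
  linarith

lemma quintic_mul_one_sub_sq_le {r : ℝ} (hr : 0 < r) (hr1 : r ≤ 1) :
    (r / 2 + r ^ 3 / 8 + r ^ 5 / 36) * (1 - r ^ 2) ≤ 0.22 := by
  nlinarith [sq_nonneg (r - 0.61), mul_nonneg hr.le (sq_nonneg (r - 0.61)),
    mul_nonneg (mul_nonneg hr.le hr.le) (sq_nonneg (r - 0.61)), sub_nonneg.mpr hr1]

theorem stmt_3 : ∀ r ∈ Set.Ioc (0:ℝ) 1, (Real.exp (r ^ 2 / 2) - 1) * (-Real.log r) ≤ 0.11 := by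
  rintro r ⟨hr, hr1⟩
  have hx0 : 0 ≤ r ^ 2 / 2 := by positivity
  have hx1 : r ^ 2 / 2 ≤ 1 := by nlinarith
  calc (exp (r ^ 2 / 2) - 1) * (-log r)
      ≤ (r ^ 2 / 2 + (r ^ 2 / 2) ^ 2 / 2 + 2 / 9 * (r ^ 2 / 2) ^ 3) * ((r⁻¹ - r) / 2) :=
        mul_le_mul (exp_sub_one_le_cubic hx0 hx1) (neg_log_le_half_inv_sub hr hr1)
          (neg_nonneg.2 (log_nonpos hr.le hr1)) (by positivity)
    _ = (r / 2 + r ^ 3 / 8 + r ^ 5 / 36) * (1 - r ^ 2) / 2 := by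
        field_simp
        ring
    _ ≤ 0.11 := by linarith [quintic_mul_one_sub_sq_le hr hr1]
end

section
/- The integral ∫₀¹ (log(1−r) + r)² / r dr equals 2ζ(3) − 3/2. -/
/-!
Expanding the square, the integrand is `log (1 - r) ^ 2 / r + 2 log (1 - r) + r`, and the last two
terms integrate to `-2 + 1/2`. After `r ↦ 1 - r`, the first term becomes `log x ^ 2 / (1 - x)`;
expanding `1 / (1 - x)` as a geometric series and substituting `x = exp (-t)` turns the `n`-th term
into the Gamma integral `∫ t ^ 2 exp (-(n + 1) t) = 2 / (n + 1) ^ 3`, which sums to `2 ζ(3)`.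
-/

open Real MeasureTheory Set
open scoped Nat

lemma image_exp_neg_Ioi_zero : (fun t : ℝ => exp (-t)) '' Ioi 0 = Ioo 0 1 := by
  ext x
  constructor
  · rintro ⟨t, ht, rfl⟩
    exact ⟨exp_pos _, exp_lt_one_iff.mpr (neg_neg_of_pos ht)⟩
  · rintro ⟨hx0, hx1⟩
    exact ⟨-log x, neg_pos.mpr (log_neg hx0 hx1), by simp [exp_log hx0]⟩

lemma integral_pow_mul_neg_log_pow (n k : ℕ) :
    ∫ x in Ioo (0:ℝ) 1, x ^ n * (-log x) ^ k = k ! / ((n:ℝ) + 1) ^ (k + 1) := by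
  have hsubst := integral_image_eq_integral_abs_deriv_smul (measurableSet_Ioi (a := 0))
    (fun t _ => ((hasDerivAt_neg t).exp).hasDerivWithinAt)
    ((exp_injective.comp neg_injective).injOn) (fun x : ℝ => x ^ n * (-log x) ^ k)
  rw [image_exp_neg_Ioi_zero] at hsubst
  have hgamma := integral_rpow_mul_exp_neg_mul_Ioi (a := k + 1) (r := n + 1)
    (by positivity) (by positivity)
  rw [hsubst]
  calc _ = ∫ t in Ioi (0:ℝ), t ^ ((k + 1 : ℝ) - 1) * exp (-((n + 1) * t)) := by
        refine setIntegral_congr_fun measurableSet_Ioi fun t _ => ?_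
        simp only [smul_eq_mul, log_exp, neg_neg, mul_neg_one, abs_neg, abs_of_pos (exp_pos _),
          add_sub_cancel_right, rpow_natCast, ← exp_nat_mul]
        rw [show -((n + 1) * t) = n * -t + -t by ring, exp_add]
        ring
    _ = k ! / ((n:ℝ) + 1) ^ (k + 1) := by
        rw [hgamma, Gamma_nat_eq_factorial, ← Nat.cast_succ k, rpow_natCast, one_div, inv_pow,
          inv_mul_eq_div]

lemma summable_one_div_nat_add_one_pow {p : ℕ} (hp : 1 < p) :
    Summable fun n : ℕ => 1 / ((n : ℝ) + 1) ^ p := by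
  simpa using (summable_nat_add_iff 1).mpr (Real.summable_one_div_nat_pow.mpr hp)

lemma riemannZeta_natCast_eq_tsum {p : ℕ} (hp : 1 < p) :
    riemannZeta p = ((∑' n : ℕ, 1 / ((n : ℝ) + 1) ^ p : ℝ) : ℂ) := by
  rw [zeta_eq_tsum_one_div_nat_add_one_cpow (by simpa using hp), Complex.ofReal_tsum]
  push_cast
  simp_rw [Complex.cpow_natCast]

lemma integral_neg_log_pow_div_one_sub {k : ℕ} (hk : 1 ≤ k) :
    ∫ x in Ioo (0:ℝ) 1, (-log x) ^ k / (1 - x) =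
      k ! * ∑' n : ℕ, 1 / ((n : ℝ) + 1) ^ (k + 1) := by
  set F : ℕ → ℝ → ℝ := fun n x => x ^ n * (-log x) ^ k
  -- its integral is nonzero, and a non-integrable function has integral `0`
  have hF_int (n : ℕ) : Integrable (F n) (volume.restrict (Ioo 0 1)) :=
    .of_integral_ne_zero (by simp only [F, integral_pow_mul_neg_log_pow]; positivity)
  have hF_norm (n : ℕ) : ∫ x in Ioo (0:ℝ) 1, ‖F n x‖ = ∫ x in Ioo (0:ℝ) 1, F n x :=
    setIntegral_congr_fun measurableSet_Ioo fun x ⟨hx0, hx1⟩ =>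
      norm_of_nonneg <| mul_nonneg (pow_nonneg hx0.le n)
        (pow_nonneg (neg_nonneg.mpr (log_nonpos hx0.le hx1.le)) k)
  have hF_sum : Summable fun n => ∫ x in Ioo (0:ℝ) 1, ‖F n x‖ :=
    ((summable_one_div_nat_add_one_pow (p := k + 1) (by omega)).mul_left (k ! : ℝ)).congr
      fun n => by rw [hF_norm, integral_pow_mul_neg_log_pow, mul_one_div]
  calc ∫ x in Ioo (0:ℝ) 1, (-log x) ^ k / (1 - x) = ∫ x in Ioo (0:ℝ) 1, ∑' n, F n x :=
        setIntegral_congr_fun measurableSet_Ioo fun x ⟨hx0, hx1⟩ => by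
          rw [tsum_mul_right, tsum_geometric_of_lt_one hx0.le hx1, inv_mul_eq_div]
    _ = ∑' n, ∫ x in Ioo (0:ℝ) 1, F n x :=
        (integral_tsum_of_summable_integral_norm hF_int hF_sum).symm
    _ = k ! * ∑' n : ℕ, 1 / ((n : ℝ) + 1) ^ (k + 1) := by
        simp only [F, integral_pow_mul_neg_log_pow, ← tsum_mul_left, mul_one_div]

lemma setIntegral_Ioo_zero_one_comp_one_sub {E : Type*} [NormedAddCommGroup E] [NormedSpace ℝ E]
    (g : ℝ → E) : ∫ r in Ioo (0:ℝ) 1, g (1 - r) = ∫ x in Ioo (0:ℝ) 1, g x := by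
  simpa [intervalIntegral.integral_of_le, integral_Ioc_eq_integral_Ioo] using
    intervalIntegral.integral_comp_sub_left g (a := 0) (b := 1) 1

lemma integral_log_one_sub_sq_div :
    ∫ r in Ioo (0:ℝ) 1, log (1 - r) ^ 2 / r = 2 * ∑' n : ℕ, 1 / ((n : ℝ) + 1) ^ 3 := by
  have hreflect := setIntegral_Ioo_zero_one_comp_one_sub fun x => (-log x) ^ 2 / (1 - x)
  have hseries := integral_neg_log_pow_div_one_sub (k := 2) (by norm_num)
  simp only [sub_sub_cancel, neg_sq] at hreflect hseries
  rw [hreflect, hseries]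
  norm_num

lemma intervalIntegrable_log_one_sub (a b : ℝ) :
    IntervalIntegrable (fun r => log (1 - r)) volume a b := by
  simpa using (intervalIntegral.intervalIntegrable_log' (a := 1 - a) (b := 1 - b)).comp_sub_left 1

lemma integral_two_mul_log_one_sub_add_id :
    ∫ r in Ioo (0:ℝ) 1, (2 * log (1 - r) + r) = -3 / 2 := by
  rw [← integral_Ioc_eq_integral_Ioo, ← intervalIntegral.integral_of_le zero_le_one,
    intervalIntegral.integral_add ((intervalIntegrable_log_one_sub 0 1).const_mul 2)
      intervalIntegral.intervalIntegrable_id,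
    intervalIntegral.integral_const_mul, intervalIntegral.integral_comp_sub_left log,
    integral_id]
  norm_num [integral_log_from_zero]

theorem stmt_8 :
    ((∫ r in Set.Ioo (0:ℝ) 1, (Real.log (1 - r) + r) ^ 2 / r : ℝ) : ℂ) =
      2 * riemannZeta 3 - 3 / 2 := by
  set S := ∑' n : ℕ, 1 / ((n : ℝ) + 1) ^ 3
  have hS : 0 < S := (summable_one_div_nat_add_one_pow (by norm_num)).tsum_pos
    (fun n => by positivity) 0 (by norm_num)
  have hsplit : ∀ r ∈ Ioo (0:ℝ) 1,
      (log (1 - r) + r) ^ 2 / r = log (1 - r) ^ 2 / r + (2 * log (1 - r) + r) := by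
    rintro r ⟨hr, -⟩
    field_simp
    ring
  have hA : ∫ r in Ioo (0:ℝ) 1, log (1 - r) ^ 2 / r = 2 * S := integral_log_one_sub_sq_div
  have hA_int : IntegrableOn (fun r => log (1 - r) ^ 2 / r) (Ioo 0 1) :=
    .of_integral_ne_zero (by rw [hA]; positivity)
  have hB_int : IntegrableOn (fun r => 2 * log (1 - r) + r) (Ioo 0 1) :=
    (intervalIntegrable_iff_integrableOn_Ioo_of_le zero_le_one).mp <|
      ((intervalIntegrable_log_one_sub 0 1).const_mul 2).add intervalIntegral.intervalIntegrable_id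
  have hζ : riemannZeta 3 = S := by
    simpa only [Nat.cast_ofNat] using riemannZeta_natCast_eq_tsum (p := 3) (by norm_num)
  rw [setIntegral_congr_fun measurableSet_Ioo hsplit, integral_add hA_int hB_int, hA,
    integral_two_mul_log_one_sub_add_id]
  push_cast
  rw [hζ]
  ring
end

section
/- Let b : [0,1) → ℝ be continuous with 0 ≤ b(r) ≤ M, let 0 < β < 3/2, and define A(r) = ∫₀^r b(t)·t·(1−t)^{−β} dt. Then ∫₀¹ (A(r)/r)² r dr < ∞. -/
/-! Since `b` is bounded by `M`, `|A r| ≤ M r ∫₀ʳ (1 - t)^(-β) dt`. Enlarging the exponent to some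
`γ ∈ (1, 3/2)` with `β ≤ γ` makes this at most `M r (1 - r)^(1 - γ) / (γ - 1)`, so the integrand
`(A r / r)² r` is `O((1 - r)^(2 - 2γ))`, which is integrable near `1` because `2 - 2γ > -1`. -/

open Real MeasureTheory intervalIntegral

theorem integral_one_sub_rpow_neg_le {γ r : ℝ} (hγ : 1 < γ) (hr : r < 1) :
    ∫ t in (0:ℝ)..r, (1 - t) ^ (-γ) ≤ (1 - r) ^ (1 - γ) / (γ - 1) := by
  rw [integral_comp_sub_left (fun u => u ^ (-γ)) 1, sub_zero,
    integral_rpow (Or.inr ⟨by linarith, Set.notMem_uIcc_of_lt (by linarith) one_pos⟩), one_rpow,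
    show -γ + 1 = 1 - γ by ring, ← neg_div_neg_eq, neg_sub, neg_sub]
  exact div_le_div_of_nonneg_right (by linarith) (by linarith)

theorem abs_integral_mul_one_sub_rpow_neg_le {b : ℝ → ℝ} {M β γ r : ℝ} (hr0 : 0 ≤ r)
    (hr1 : r < 1) (hβγ : β ≤ γ) (hγ : 1 < γ) (hb : ∀ t ∈ Set.Icc 0 r, |b t| ≤ M) :
    |∫ t in (0:ℝ)..r, b t * t * (1 - t) ^ (-β)| ≤ M / (γ - 1) * r * (1 - r) ^ (1 - γ) := by
  have hM : 0 ≤ M := (abs_nonneg _).trans (hb 0 ⟨le_rfl, hr0⟩)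
  have hcont : ContinuousOn (fun t : ℝ => (1 - t) ^ (-γ)) (Set.uIcc 0 r) := by
    intro t ht
    rw [Set.uIcc_of_le hr0] at ht
    exact ContinuousAt.continuousWithinAt <| (continuousAt_const.sub continuousAt_id).rpow_const
      (Or.inl (by linarith [ht.2] : (0:ℝ) < 1 - t).ne')
  have hg : IntervalIntegrable (fun t => M * r * (1 - t) ^ (-γ)) volume 0 r :=
    (continuousOn_const.mul hcont).intervalIntegrable
  have hle : ∀ t ∈ Set.Ioc 0 r, ‖b t * t * (1 - t) ^ (-β)‖ ≤ M * r * (1 - t) ^ (-γ) := by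
    rintro t ⟨ht0, htr⟩
    have h1t : 0 < 1 - t := by linarith
    rw [Real.norm_eq_abs, abs_mul, abs_mul, abs_of_pos ht0, abs_of_pos (rpow_pos_of_pos h1t _)]
    have hpow : (1 - t) ^ (-β) ≤ (1 - t) ^ (-γ) :=
      rpow_le_rpow_of_exponent_ge h1t (by linarith) (neg_le_neg hβγ)
    exact mul_le_mul (mul_le_mul (hb t ⟨ht0.le, htr⟩) htr ht0.le hM) hpow (by positivity)
      (by positivity)
  calc |∫ t in (0:ℝ)..r, b t * t * (1 - t) ^ (-β)|
      ≤ ∫ t in (0:ℝ)..r, M * r * (1 - t) ^ (-γ) :=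
        norm_integral_le_of_norm_le hr0 (ae_of_all _ hle) hg
    _ = M * r * ∫ t in (0:ℝ)..r, (1 - t) ^ (-γ) := integral_const_mul _ _
    _ ≤ M * r * ((1 - r) ^ (1 - γ) / (γ - 1)) := by
        gcongr
        exact integral_one_sub_rpow_neg_le hγ hr1
    _ = M / (γ - 1) * r * (1 - r) ^ (1 - γ) := by ring

theorem sq_div_mul_le_of_abs_le {a r c : ℝ} (hr0 : 0 < r) (hr1 : r ≤ 1) (ha : |a| ≤ c * r) :
    (a / r) ^ 2 * r ≤ c ^ 2 := by
  have hdiv : |a / r| ≤ c := by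
    rwa [abs_div, abs_of_pos hr0, div_le_iff₀ hr0]
  calc (a / r) ^ 2 * r ≤ (a / r) ^ 2 := mul_le_of_le_one_right (sq_nonneg _) hr1
    _ = |a / r| ^ 2 := (sq_abs _).symm
    _ ≤ c ^ 2 := pow_le_pow_left₀ (abs_nonneg _) hdiv 2

theorem integrableOn_one_sub_rpow {s : ℝ} (hs : -1 < s) :
    IntegrableOn (fun r : ℝ => (1 - r) ^ s) (Set.Ioo 0 1) := by
  have h : IntervalIntegrable (fun r : ℝ => (1 - r) ^ s) volume 0 1 := by
    simpa using ((intervalIntegrable_rpow' (a := 0) (b := 1) hs).comp_sub_left 1).symm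
  exact ((intervalIntegrable_iff_integrableOn_Ioc_of_le zero_le_one).mp h).mono_set
    Set.Ioo_subset_Ioc_self

theorem stmt_11_general (b : ℝ → ℝ) (M β : ℝ)
    (hbM : ∀ r ∈ Set.Ico (0:ℝ) 1, 0 ≤ b r ∧ b r ≤ M) (hβ : β < 3 / 2)
    (A : ℝ → ℝ)
    (hA : ∀ r ∈ Set.Ioo (0:ℝ) 1, A r = ∫ t in (0:ℝ)..r, b t * t * (1 - t) ^ (-β)) :
    ∫⁻ r in Set.Ioo (0:ℝ) 1, ENNReal.ofReal ((A r / r) ^ 2 * r) < ⊤ := by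
  set γ : ℝ := max β (5 / 4)
  have hγ1 : 1 < γ := lt_max_of_lt_right (by norm_num)
  have hγ32 : γ < 3 / 2 := max_lt hβ (by norm_num)
  set K : ℝ := M / (γ - 1)
  have hdom : ∀ r ∈ Set.Ioo (0:ℝ) 1,
      (A r / r) ^ 2 * r ≤ K ^ 2 * (1 - r) ^ ((1 - γ) * 2) := by
    rintro r ⟨hr0, hr1⟩
    have hb : ∀ t ∈ Set.Icc 0 r, |b t| ≤ M := fun t ht => by
      obtain ⟨hbt0, hbtM⟩ := hbM t ⟨ht.1, by linarith [ht.2]⟩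
      exact abs_le.2 ⟨by linarith, hbtM⟩
    have hAr := abs_integral_mul_one_sub_rpow_neg_le hr0.le hr1 (le_max_left β (5 / 4)) hγ1 hb
    rw [← hA r ⟨hr0, hr1⟩, mul_right_comm] at hAr
    rw [rpow_mul (by linarith), rpow_two, ← mul_pow]
    exact sq_div_mul_le_of_abs_le hr0 hr1.le hAr
  calc ∫⁻ r in Set.Ioo (0:ℝ) 1, ENNReal.ofReal ((A r / r) ^ 2 * r)
      ≤ ∫⁻ r in Set.Ioo (0:ℝ) 1, ENNReal.ofReal (K ^ 2 * (1 - r) ^ ((1 - γ) * 2)) :=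
        setLIntegral_mono' measurableSet_Ioo fun r hr => ENNReal.ofReal_le_ofReal (hdom r hr)
    _ < ⊤ := IntegrableOn.setLIntegral_lt_top
        ((integrableOn_one_sub_rpow (by linarith)).const_mul _)

theorem stmt_11 (b : ℝ → ℝ) (M β : ℝ) (hb : ContinuousOn b (Set.Ico 0 1))
    (hbM : ∀ r ∈ Set.Ico (0:ℝ) 1, 0 ≤ b r ∧ b r ≤ M) (hβ0 : 0 < β) (hβ : β < 3 / 2)
    (A : ℝ → ℝ)
    (hA : ∀ r ∈ Set.Ioo (0:ℝ) 1, A r = ∫ t in (0:ℝ)..r, b t * t * (1 - t) ^ (-β)) :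
    ∫⁻ r in Set.Ioo (0:ℝ) 1, ENNReal.ofReal ((A r / r) ^ 2 * r) < ⊤ :=
  stmt_11_general b M β hbM hβ A hA
end

section
/- Let I > 0 and for λ > 2I define α_λ = (−3I + √(I² + 4Iλ))/(λ − 2I). Then α_λ ∈ (0,1) for λ large enough, α_λ = 2√I/√λ + O(1/λ) as λ → ∞, and g(α_λ) = λ/2 + √(Iλ) + O(1) as λ → ∞, where g(α) = λ/(2√(1−α)) + (√(1−α)/α)·I. -/
/-!
`α_λ` is the root in `(0, 1)` of `α² (λ - 2I) + 6αI - 4I = 0`, i.e. of `λα² = 2I(1 - α)(2 - α)`.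
With `b = 2√I/√λ` (so `λb² = 4I`) this reads `λ(b - α)(b + α) = 2Iα(3 - α)`, whence
`0 ≤ b - α ≤ 6I/λ`.

For the value of `g`, substitute `α = 1 - u²`. The quadratic becomes
`λ(1 - u²)² = 2Iu²(1 + u²)`, which turns `g(α)` into `2Iu/α²` and `√(Iλ)` into
`Iu√(2(1 + u²))/α`, so that
`g(α) - λ/2 - √(Iλ) = Iu(1 - u)(2 + u + u² - (1 + u)√(2(1 + u²))) / (1 - u²)²`.
The last factor of the numerator vanishes at `u = 1` and lies in `[0, 2(1 - u)]`, so the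
difference lies in `[0, I/2]`.
-/

open Real Filter Asymptotics

noncomputable def optAlpha (I L : ℝ) : ℝ :=
  (-3 * I + √(I ^ 2 + 4 * I * L)) / (L - 2 * I)

section
variable {I L : ℝ}

lemma optAlpha_mem_Ioo (hI : 0 < I) (hL : 2 * I < L) : optAlpha I L ∈ Set.Ioo 0 1 := by
  have hd : 0 < L - 2 * I := by linarith
  have hs := sq_sqrt (show 0 ≤ I ^ 2 + 4 * I * L by nlinarith)
  have hs0 := sqrt_nonneg (I ^ 2 + 4 * I * L)
  constructor
  · exact div_pos (by nlinarith) hd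
  · rw [optAlpha, div_lt_one hd]
    nlinarith

lemma optAlpha_quadratic (hI : 0 ≤ I) (hL : 2 * I < L) :
    optAlpha I L ^ 2 * (L - 2 * I) + 6 * optAlpha I L * I - 4 * I = 0 := by
  have hd : L - 2 * I ≠ 0 := by linarith
  have hs := sq_sqrt (show 0 ≤ I ^ 2 + 4 * I * L by nlinarith)
  have ha : optAlpha I L * (L - 2 * I) = -3 * I + √(I ^ 2 + 4 * I * L) := div_mul_cancel₀ _ hd
  refine mul_left_cancel₀ hd ?_
  linear_combination (optAlpha I L * (L - 2 * I) + √(I ^ 2 + 4 * I * L) + 3 * I) * ha + hs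

lemma abs_sub_two_sqrt_div_sqrt_le {a : ℝ} (hI : 0 ≤ I) (hL : 0 < L) (ha0 : 0 < a) (ha3 : a ≤ 3)
    (hq : a ^ 2 * (L - 2 * I) + 6 * a * I - 4 * I = 0) :
    |a - 2 * √I / √L| ≤ 6 * I / L := by
  set b := 2 * √I / √L
  have hb0 : 0 ≤ b := by positivity
  have hb : b ^ 2 * L = 4 * I := by
    rw [div_pow, mul_pow, sq_sqrt hI, sq_sqrt hL.le]; field_simp; ring
  have key : (b - a) * (a + b) * L = 2 * I * a * (3 - a) := by linear_combination hb - hq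
  have hab : a ≤ b := by
    by_contra! h
    nlinarith [mul_pos (mul_pos (sub_pos.2 h) (add_pos_of_pos_of_nonneg ha0 hb0)) hL,
      mul_nonneg (mul_nonneg hI ha0.le) (sub_nonneg.2 ha3)]
  rw [abs_sub_comm, abs_of_nonneg (sub_nonneg.2 hab), le_div_iff₀ hL]
  nlinarith
end

lemma one_add_mul_sqrt_mem_Icc {u : ℝ} (hu0 : 0 ≤ u) (hu1 : u ≤ 1) :
    (1 + u) * √(2 * (1 + u ^ 2)) ∈ Set.Icc (u ^ 2 + 3 * u) (2 + u + u ^ 2) := by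
  set y := (1 + u) * √(2 * (1 + u ^ 2))
  have hy0 : 0 ≤ y := by positivity
  have hy2 : y ^ 2 = (1 + u) ^ 2 * (2 * (1 + u ^ 2)) := by rw [mul_pow, sq_sqrt (by positivity)]
  have hdiff : (2 + u + u ^ 2 - y) * (2 + u + u ^ 2 + y) =
      (1 - u) * (2 + 2 * u + 3 * u ^ 2 + u ^ 3) := by
    linear_combination -hy2
  have hp : 0 ≤ (1 - u) * (2 + 2 * u + 3 * u ^ 2 + u ^ 3) :=
    mul_nonneg (sub_nonneg.2 hu1) (by positivity)
  have hle : y ≤ 2 + u + u ^ 2 := by nlinarith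
  refine ⟨?_, hle⟩
  nlinarith [mul_nonneg (sub_nonneg.2 hle) hy0,
    mul_nonneg (sub_nonneg.2 hu1) (show 0 ≤ 2 - u ^ 2 - u ^ 3 by nlinarith)]

lemma abs_sub_half_add_sqrt_le_of_quadratic {I L a : ℝ} (hI : 0 ≤ I) (ha0 : 0 < a) (ha1 : a < 1)
    (hq : a ^ 2 * (L - 2 * I) + 6 * a * I - 4 * I = 0) :
    |L / (2 * √(1 - a)) + (√(1 - a) / a) * I - (L / 2 + √(I * L))| ≤ I / 2 := by
  obtain ⟨u, hu0, hu1, rfl, hu⟩ : ∃ u, 0 < u ∧ u < 1 ∧ a = 1 - u ^ 2 ∧ √(1 - a) = u := by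
    refine ⟨√(1 - a), sqrt_pos.2 (by linarith), ?_, by rw [sq_sqrt (by linarith)]; ring, rfl⟩
    rw [sqrt_lt' one_pos]; linarith
  rw [hu]
  have hLa : L * (1 - u ^ 2) ^ 2 = 2 * I * u ^ 2 * (1 + u ^ 2) := by linear_combination hq
  have hsqrt : √(I * L) = I * u / (1 - u ^ 2) * √(2 * (1 + u ^ 2)) := by
    have : I * L = (I * u / (1 - u ^ 2)) ^ 2 * (2 * (1 + u ^ 2)) := by
      field_simp
      linear_combination I * hLa
    rw [this, sqrt_mul (sq_nonneg _), sqrt_sq (by positivity)]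
  have hD : L / (2 * u) + (u / (1 - u ^ 2)) * I - (L / 2 + √(I * L)) =
      I * u * (1 - u) * (2 + u + u ^ 2 - (1 + u) * √(2 * (1 + u ^ 2))) / (1 - u ^ 2) ^ 2 := by
    rw [hsqrt]
    field_simp
    linear_combination (1 - u) * hLa
  obtain ⟨hlow, hupp⟩ := one_add_mul_sqrt_mem_Icc hu0.le hu1.le
  have hIu : 0 ≤ I * u * (1 - u) := by have := hu1.le; positivity
  have hgap : 2 + u + u ^ 2 - (1 + u) * √(2 * (1 + u ^ 2)) ≤ 2 * (1 - u) := by linarith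
  rw [hD, abs_of_nonneg (by have := sub_nonneg.2 hupp; positivity), div_le_iff₀ (by positivity)]
  -- `(1 + u)² - 4u = (1 - u)²`
  nlinarith [mul_le_mul_of_nonneg_left hgap hIu, mul_nonneg hI (sq_nonneg ((1 - u) * (1 - u)))]

theorem stmt_14 (I : ℝ) (hI : 0 < I)
    (α : ℝ → ℝ)
    (hα : ∀ lam : ℝ, 2 * I < lam →
      α lam = (-3 * I + Real.sqrt (I ^ 2 + 4 * I * lam)) / (lam - 2 * I))
    (g : ℝ → ℝ → ℝ)
    (hg : ∀ lam a : ℝ,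
      g lam a = lam / (2 * Real.sqrt (1 - a)) + (Real.sqrt (1 - a) / a) * I) :
    (∀ᶠ lam in atTop, α lam ∈ Set.Ioo (0:ℝ) 1) ∧
    (fun lam => α lam - 2 * Real.sqrt I / Real.sqrt lam) =O[atTop] (fun lam => 1 / lam) ∧
    (fun lam => g lam (α lam) - (lam / 2 + Real.sqrt (I * lam))) =O[atTop]
      (fun _ => (1:ℝ)) := by
  have hlarge : ∀ᶠ lam in atTop, 2 * I < lam ∧ α lam = optAlpha I lam :=
    (eventually_gt_atTop (2 * I)).mono fun lam hL => ⟨hL, hα lam hL⟩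
  refine ⟨?_, IsBigO.of_bound (6 * I) ?_, IsBigO.of_bound (I / 2) ?_⟩ <;>
    filter_upwards [hlarge] with lam ⟨hL, hαL⟩ <;>
    rw [hαL]
  · exact optAlpha_mem_Ioo hI hL
  · obtain ⟨h0, h1⟩ := optAlpha_mem_Ioo hI hL
    have hL0 : 0 < lam := by linarith
    rw [norm_eq_abs, norm_eq_abs, abs_of_pos (one_div_pos.2 hL0), mul_one_div]
    exact abs_sub_two_sqrt_div_sqrt_le hI.le hL0 h0 (by linarith) (optAlpha_quadratic hI.le hL)
  · obtain ⟨h0, h1⟩ := optAlpha_mem_Ioo hI hL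
    simpa only [hg, norm_eq_abs, abs_one, mul_one] using abs_sub_half_add_sqrt_le_of_quadratic hI.le h0 h1 (optAlpha_quadratic hI.le hL)
end
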